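/- Let $\{F_\alpha\}_{\alpha=1}^{d^2-1}$ be Hermitian traceless $d\times d$ matrices with $\mathrm{Tr}(F_\alpha F_\beta) = \delta_{\alpha\beta}$, let $F = \sum_{\alpha=1}^{d^2-1} F_\alpha$, and define $P_\alpha = \frac{1}{d^2} I + t[F - d(d+1)F_\alpha]$ for $\alpha = 1,\dots,d^2-1$ and $P_{d^2} = \frac{1}{d^2} I + t(d+1)F$. Then $\sum_{\alpha=1}^{d^2} P_\alpha = I$, each $P_\alpha$ is Hermitian with $\mathrm{Tr}(P_\alpha) = 1/d$, $\mathrm{Tr}(P_\alpha^2) = \frac{1}{d^3} + t^2(d-1)(d+1)^3$ for every $\alpha$, and $\mathrm{Tr}(P_\alpha P_\beta) = \frac{1-da}{d(d^2-1)}$ for $\alpha \neq \beta$, where $a = \frac{1}{d^3} + t^2(d-1)(d+1)^3$. -/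

import Mathlib

/-!
With `G = ∑ α, F α`, orthonormality gives `Tr (G F_α) = 1` and `Tr (G G) = d² - 1`. Each `P` is
`d⁻² I` plus a traceless combination `X` of `G` and at most one `F_α`, so `Tr (P P') = d⁻³ + Tr (X X')`
and every claim becomes a polynomial identity in `d` and `t`. The weight `d (d + 1)` is what makes
the `G`-components of all the `P` cancel in their sum.
-/

open Matrix

section Orthonormal

variable {n ι : Type*} [Fintype n] [Fintype ι] [DecidableEq ι]
  {F : ι → Matrix n n ℂ} (hF : ∀ α β, (F α * F β).trace = if α = β then 1 else 0)
include hF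

theorem trace_sum_mul_of_orthonormal (β : ι) : ((∑ α, F α) * F β).trace = 1 := by
  simp [Finset.sum_mul, trace_sum, hF]

theorem trace_mul_sum_of_orthonormal (α : ι) : (F α * ∑ β, F β).trace = 1 := by
  simp [Finset.mul_sum, trace_sum, hF]

theorem trace_sum_mul_sum_of_orthonormal :
    ((∑ α, F α) * ∑ β, F β).trace = Fintype.card ι := by
  simp [Finset.sum_mul, trace_sum, trace_mul_sum_of_orthonormal hF]

theorem trace_sum_sub_smul_mul_sum_sub_smul_of_orthonormal (k : ℂ) (α β : ι) :
    (((∑ γ, F γ) - k • F α) * ((∑ γ, F γ) - k • F β)).trace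
      = Fintype.card ι - 2 * k + k ^ 2 * if α = β then 1 else 0 := by
  simp only [sub_mul, mul_sub, smul_mul_assoc, mul_smul_comm, trace_sub, trace_smul,
    trace_sum_mul_sum_of_orthonormal hF, trace_sum_mul_of_orthonormal hF,
    trace_mul_sum_of_orthonormal hF, hF, smul_eq_mul]
  ring

theorem trace_sum_sub_smul_mul_sum_of_orthonormal (k : ℂ) (α : ι) :
    (((∑ γ, F γ) - k • F α) * ∑ γ, F γ).trace = Fintype.card ι - k := by
  simp only [sub_mul, smul_mul_assoc, trace_sub, trace_smul,
    trace_sum_mul_sum_of_orthonormal hF, trace_mul_sum_of_orthonormal hF, smul_eq_mul, mul_one]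

end Orthonormal

section ScalarPlusTraceless

variable {n : Type*} [DecidableEq n]

theorem isHermitian_ofReal_smul_one_add_ofReal_smul {H : Matrix n n ℂ} (hH : H.IsHermitian)
    (r s : ℝ) : ((r : ℂ) • (1 : Matrix n n ℂ) + (s : ℂ) • H).IsHermitian :=
  (isHermitian_one.smul (Complex.conj_ofReal r)).add (hH.smul (Complex.conj_ofReal s))

theorem sum_smul_one_add_smul_sum_sub_smul {ι : Type*} [Fintype ι] (F : ι → Matrix n n ℂ)
    (c s k : ℂ) :
    ∑ α, (c • (1 : Matrix n n ℂ) + s • ((∑ β, F β) - k • F α))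
      = (Fintype.card ι * c) • 1 + (s * (Fintype.card ι - k)) • ∑ β, F β := by
  simp only [Finset.sum_add_distrib, ← Finset.smul_sum, Finset.sum_sub_distrib, Finset.sum_const,
    Finset.card_univ, ← Nat.cast_smul_eq_nsmul ℂ]
  module

variable [Fintype n]

theorem trace_smul_one_add_smul {X : Matrix n n ℂ} (hX : X.trace = 0) (c s : ℂ) :
    (c • (1 : Matrix n n ℂ) + s • X).trace = c * Fintype.card n := by
  simp [trace_add, trace_smul, hX]

theorem trace_smul_one_add_smul_mul_smul_one_add_smul {X Y : Matrix n n ℂ}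
    (hX : X.trace = 0) (hY : Y.trace = 0) (c s e u : ℂ) :
    ((c • (1 : Matrix n n ℂ) + s • X) * (e • 1 + u • Y)).trace
      = c * e * Fintype.card n + s * u * (X * Y).trace := by
  simp only [add_mul, mul_add, smul_mul_assoc, mul_smul_comm, one_mul, mul_one,
    trace_add, trace_smul, trace_one, hX, hY, smul_eq_mul]
  ring

end ScalarPlusTraceless

theorem gsic_construction (d : ℕ) (hd : 2 ≤ d) (t : ℝ)
    (F : Fin (d ^ 2 - 1) → Matrix (Fin d) (Fin d) ℂ)
    (hFherm : ∀ α, (F α).IsHermitian)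
    (hFtr : ∀ α, (F α).trace = 0)
    (hFon : ∀ α β, (F α * F β).trace = if α = β then 1 else 0)
    (Ftot : Matrix (Fin d) (Fin d) ℂ) (hFtot : Ftot = ∑ α, F α)
    (P : Fin (d ^ 2 - 1) → Matrix (Fin d) (Fin d) ℂ)
    (hP : ∀ α, P α = ((1 / (d ^ 2) : ℝ) : ℂ) • (1 : Matrix (Fin d) (Fin d) ℂ)
      + (t : ℂ) • (Ftot - ((d * (d + 1) : ℝ) : ℂ) • F α))
    (Plast : Matrix (Fin d) (Fin d) ℂ)
    (hPlast : Plast = ((1 / (d ^ 2) : ℝ) : ℂ) • (1 : Matrix (Fin d) (Fin d) ℂ)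
      + ((t * (d + 1) : ℝ) : ℂ) • Ftot)
    (a : ℝ) (ha : a = 1 / d ^ 3 + t ^ 2 * (d - 1) * (d + 1) ^ 3) :
    ((∑ α, P α) + Plast = 1) ∧
    (∀ α, (P α).IsHermitian) ∧ Plast.IsHermitian ∧
    (∀ α, (P α).trace = ((1 / d : ℝ) : ℂ)) ∧ Plast.trace = ((1 / d : ℝ) : ℂ) ∧
    (∀ α, (P α * P α).trace = (a : ℂ)) ∧ (Plast * Plast).trace = (a : ℂ) ∧
    (∀ α β, α ≠ β →
      (P α * P β).trace = (((1 - d * a) / (d * (d ^ 2 - 1)) : ℝ) : ℂ)) ∧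
    (∀ α, (P α * Plast).trace = (((1 - d * a) / (d * (d ^ 2 - 1)) : ℝ) : ℂ)) := by
  subst hFtot hPlast ha
  have hd0 : (d : ℂ) ≠ 0 := Nat.cast_ne_zero.mpr (by omega)
  have hd2 : (d : ℂ) ^ 2 - 1 ≠ 0 := by
    rw [sub_ne_zero]; exact_mod_cast (Nat.one_lt_pow two_ne_zero (by omega)).ne'
  have hcard : (Fintype.card (Fin (d ^ 2 - 1)) : ℂ) = d ^ 2 - 1 := by
    rw [Fintype.card_fin, Nat.cast_sub (Nat.one_le_pow _ _ (by omega))]; push_cast; rfl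
  have hGtr : (∑ α, F α).trace = 0 := by simp [trace_sum, hFtr]
  have hG : (∑ α, F α).IsHermitian := isSelfAdjoint_sum _ fun α _ => hFherm α
  have hXtr : ∀ α, ((∑ β, F β) - ((d * (d + 1) : ℝ) : ℂ) • F α).trace = 0 := fun α => by
    simp [trace_sub, trace_smul, hGtr, hFtr]
  have hX : ∀ α, ((∑ β, F β) - ((d * (d + 1) : ℝ) : ℂ) • F α).IsHermitian := fun α =>
    hG.sub ((hFherm α).smul (Complex.conj_ofReal _))
  refine ⟨?_, fun α => hP α ▸ isHermitian_ofReal_smul_one_add_ofReal_smul (hX α) _ _,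
    isHermitian_ofReal_smul_one_add_ofReal_smul hG _ _, fun α => ?_, ?_, fun α => ?_, ?_,
    fun α β hne => ?_, fun α => ?_⟩
  · rw [Finset.sum_congr rfl fun α _ => hP α, sum_smul_one_add_smul_sum_sub_smul, hcard,
      add_add_add_comm, ← add_smul, ← add_smul]
    match_scalars
    · field_simp; ring
    · ring
  · rw [hP, trace_smul_one_add_smul (hXtr α), Fintype.card_fin]
    push_cast; field_simp
  · rw [trace_smul_one_add_smul hGtr, Fintype.card_fin]
    push_cast; field_simp
  · rw [hP, trace_smul_one_add_smul_mul_smul_one_add_smul (hXtr α) (hXtr α),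
      trace_sum_sub_smul_mul_sum_sub_smul_of_orthonormal hFon, if_pos rfl, hcard, Fintype.card_fin]
    push_cast; field_simp; ring
  · rw [trace_smul_one_add_smul_mul_smul_one_add_smul hGtr hGtr,
      trace_sum_mul_sum_of_orthonormal hFon, hcard, Fintype.card_fin]
    push_cast; field_simp; ring
  · rw [hP, hP, trace_smul_one_add_smul_mul_smul_one_add_smul (hXtr α) (hXtr β),
      trace_sum_sub_smul_mul_sum_sub_smul_of_orthonormal hFon, if_neg hne, hcard, Fintype.card_fin]
    push_cast; field_simp; ring
  · rw [hP, trace_smul_one_add_smul_mul_smul_one_add_smul (hXtr α) hGtr,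
      trace_sum_sub_smul_mul_sum_of_orthonormal hFon, hcard, Fintype.card_fin]
    push_cast; field_simp; ring
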